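/- arXiv:2512.10188 — 3 statements merged into one kernel-verified Lean document; each statement's English description precedes it below -/
import Mathlib

section
/- Let X be an n×d real matrix, Y ∈ ℝⁿ, 𝕏 = XᵀX, and let X⁺ denote the Moore–Penrose pseudo-inverse of X. Let step-sizes α_k > 0 satisfy sup_ℓ α_ℓ·‖𝕏‖ < 1, and define the gradient descent iterates w_{k+1} = (I − α_k·𝕏) w_k + α_k·Xᵀ Y. If the initialization w₁ is orthogonal to ker(X), then for every k ≥ 1, ‖w_{k+1} − X⁺Y‖₂ ≤ exp(− σ⁺min(𝕏) · Σ_{ℓ=1}^k α_ℓ) · ‖w₁ − X⁺Y‖₂, where σ⁺min(𝕏) denotes the smallest non-zero singular value of 𝕏. In particular, if Σ_{ℓ=1}^∞ α_ℓ = ∞, then ‖w_k − X⁺Y‖₂ → 0 as k → ∞. -/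
open Matrix MeasureTheory ProbabilityTheory Filter
open scoped BigOperators

noncomputable section

/-- Euclidean norm of a vector in `Fin n → ℝ`. -/
def l2norm {n : ℕ} (v : Fin n → ℝ) : ℝ := Real.sqrt (∑ i, (v i) ^ 2)

/-- Spectral norm (ℓ²-operator norm) of a real matrix. -/
def specNorm {m n : ℕ} (A : Matrix (Fin m) (Fin n) ℝ) : ℝ :=
  sSup {c : ℝ | ∃ v : Fin n → ℝ, l2norm v = 1 ∧ c = l2norm (A *ᵥ v)}

/-- The smallest non-zero singular value of a real matrix:
the infimum of all positive `s` such that `s ^ 2` is an eigenvalue of `AᵀA`. -/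
def sigmaMinPos {m n : ℕ} (A : Matrix (Fin m) (Fin n) ℝ) : ℝ :=
  sInf {s : ℝ | 0 < s ∧ ∃ v : Fin n → ℝ, v ≠ 0 ∧ (Aᵀ * A) *ᵥ v = (s ^ 2) • v}

/-- `B` is the Moore–Penrose pseudo-inverse of `A` (the four Penrose conditions). -/
def IsMoorePenrose {m n : ℕ} (A : Matrix (Fin m) (Fin n) ℝ)
    (B : Matrix (Fin n) (Fin m) ℝ) : Prop :=
  A * B * A = A ∧ B * A * B = B ∧ (A * B)ᵀ = A * B ∧ (B * A)ᵀ = B * A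

/-- `w` lies in the orthogonal complement of `ker A`. -/
def perpKer {m n : ℕ} (A : Matrix (Fin m) (Fin n) ℝ) (w : Fin n → ℝ) : Prop :=
  ∀ v : Fin n → ℝ, A *ᵥ v = 0 → w ⬝ᵥ v = 0

/-- Entrywise expectation of a random matrix. -/
def matExp {Ω : Type*} [MeasurableSpace Ω] (μ : Measure Ω) {m n : ℕ}
    (M : Ω → Matrix (Fin m) (Fin n) ℝ) : Matrix (Fin m) (Fin n) ℝ :=
  Matrix.of fun i j => ∫ ω, M ω i j ∂μ

/-- Entrywise expectation of a random vector. -/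
def vecExp {Ω : Type*} [MeasurableSpace Ω] (μ : Measure Ω) {n : ℕ}
    (v : Ω → Fin n → ℝ) : Fin n → ℝ :=
  fun i => ∫ ω, v ω i ∂μ


/-! The error `eₖ = wₖ - X⁺Y` evolves by `eₖ₊₁ = (I - αₖ𝕏) eₖ`, because `𝕏X⁺ = Xᵀ`; and
`e₁ ⊥ ker X`, because the range of `X⁺` is `(ker X)ᗮ`. The symmetric matrix `I - αₖ𝕏` preserves
`(ker 𝕏)ᗮ = (ker X)ᗮ`, so in an orthonormal eigenbasis of `𝕏` only eigenvalues `λ > 0` carry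
mass, and for those `0 ≤ 1 - αₖλ ≤ exp (-αₖλ) ≤ exp (-αₖ σ⁺min)`.

For the limit, the same estimate is run with any positive lower bound of the positive eigenvalues
instead of `σ⁺min`: when `X = 0` the latter is the junk value `sInf ∅ = 0`. -/

open scoped RealInnerProductSpace

theorem OrthonormalBasis.norm_le_mul_norm_of_abs_inner_le {ι E : Type*} [Fintype ι]
    [NormedAddCommGroup E] [InnerProductSpace ℝ E] (b : OrthonormalBasis ι ℝ E) {x y : E}
    {r : ℝ} (hr : 0 ≤ r) (h : ∀ i, |⟪b i, y⟫| ≤ r * |⟪b i, x⟫|) : ‖y‖ ≤ r * ‖x‖ := by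
  refine le_of_sq_le_sq ?_ (by positivity)
  rw [mul_pow, ← b.sum_sq_inner_right, ← b.sum_sq_inner_right, Finset.mul_sum]
  refine Finset.sum_le_sum fun i _ => ?_
  rw [← sq_abs, ← sq_abs ⟪b i, x⟫, ← mul_pow]
  exact pow_le_pow_left₀ (abs_nonneg _) (h i) 2

theorem l2norm_eq_norm_toLp {n : ℕ} (v : Fin n → ℝ) : l2norm v = ‖WithLp.toLp 2 v‖ := by
  simp [l2norm, EuclideanSpace.norm_eq]

section
open scoped Matrix.Norms.L2Operator

theorem l2norm_mulVec_le {m n : ℕ} (A : Matrix (Fin m) (Fin n) ℝ) (v : Fin n → ℝ) :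
    l2norm (A *ᵥ v) ≤ ‖A‖ * l2norm v := by
  simpa [l2norm_eq_norm_toLp] using A.l2_opNorm_mulVec (WithLp.toLp 2 v)

theorem l2norm_mulVec_le_specNorm {m n : ℕ} (A : Matrix (Fin m) (Fin n) ℝ) {v : Fin n → ℝ}
    (hv : l2norm v = 1) : l2norm (A *ᵥ v) ≤ specNorm A :=
  le_csSup ⟨‖A‖, by rintro c ⟨u, hu, rfl⟩; simpa [hu] using l2norm_mulVec_le A u⟩ ⟨v, hv, rfl⟩
end

theorem l2norm_nonneg {n : ℕ} (v : Fin n → ℝ) : 0 ≤ l2norm v := Real.sqrt_nonneg _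

theorem l2norm_smul {n : ℕ} (c : ℝ) (v : Fin n → ℝ) : l2norm (c • v) = |c| * l2norm v := by
  simp [l2norm_eq_norm_toLp, WithLp.toLp_smul, norm_smul]

theorem perpKer.sub {m n : ℕ} {A : Matrix (Fin m) (Fin n) ℝ} {u v : Fin n → ℝ}
    (hu : perpKer A u) (hv : perpKer A v) : perpKer A (u - v) := fun x hx => by
  rw [sub_dotProduct, hu x hx, hv x hx, sub_zero]

theorem perpKer_transpose_mul_self_iff {m n : ℕ} {X : Matrix (Fin m) (Fin n) ℝ}
    {v : Fin n → ℝ} : perpKer (Xᵀ * X) v ↔ perpKer X v := by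
  simpa [perpKer, conjTranspose_eq_transpose_of_trivial] using
    forall_congr' fun u => imp_congr_left (conjTranspose_mul_self_mulVec_eq_zero X u)

theorem exists_pos_forall_le_of_pos {ι : Type*} [Finite ι] (f : ι → ℝ) :
    ∃ s > 0, ∀ i, 0 < f i → s ≤ f i := by
  have hle : ∀ i, ∀ᶠ s in nhdsWithin (0 : ℝ) (Set.Ioi 0), 0 < f i → s ≤ f i := fun i => by
    by_cases hi : 0 < f i
    · exact ((eventually_le_nhds hi).filter_mono nhdsWithin_le_nhds).mono fun s hs _ => hs
    · exact .of_forall fun s h => absurd h hi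
  obtain ⟨s, hs, hs0⟩ := ((eventually_all.2 hle).and self_mem_nhdsWithin).exists
  exact ⟨s, hs0, hs⟩

theorem abs_one_sub_mul_le_exp_neg {a l s : ℝ} (ha : 0 ≤ a) (hal : a * l ≤ 1) (hsl : s ≤ l) :
    |1 - a * l| ≤ Real.exp (-s * a) := by
  rw [abs_of_nonneg (by linarith)]
  calc 1 - a * l ≤ Real.exp (-(a * l)) := by linarith [Real.add_one_le_exp (-(a * l))]
    _ ≤ Real.exp (-s * a) := Real.exp_le_exp.2 (by nlinarith)

section Spectral

variable {d : ℕ} {A : Matrix (Fin d) (Fin d) ℝ}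

theorem Matrix.IsHermitian.mulVec_dotProduct (hA : A.IsHermitian) (u v : Fin d → ℝ) :
    (A *ᵥ u) ⬝ᵥ v = u ⬝ᵥ (A *ᵥ v) := by
  rw [dotProduct_comm, ← dotProduct_transpose_mulVec, (isHermitian_iff_isSymm.1 hA).eq]

theorem perpKer_one_sub_smul_mulVec (hA : A.IsHermitian) {e : Fin d → ℝ} (he : perpKer A e)
    (a : ℝ) : perpKer A ((1 - a • A) *ᵥ e) := fun v hv => by
  rw [sub_mulVec, one_mulVec, smul_mulVec, sub_dotProduct, smul_dotProduct,
    hA.mulVec_dotProduct, hv, dotProduct_zero, he v hv]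
  simp

theorem one_sub_smul_mulVec_dotProduct_eigenvectorBasis (hA : A.IsHermitian) (a : ℝ)
    (e : Fin d → ℝ) (i : Fin d) :
    ((1 - a • A) *ᵥ e) ⬝ᵥ hA.eigenvectorBasis i
      = (1 - a * hA.eigenvalues i) * (e ⬝ᵥ hA.eigenvectorBasis i) := by
  rw [sub_mulVec, one_mulVec, smul_mulVec, sub_dotProduct, smul_dotProduct,
    hA.mulVec_dotProduct, hA.mulVec_eigenvectorBasis, dotProduct_smul]
  simp only [smul_eq_mul]
  ring

theorem l2norm_eigenvectorBasis (hA : A.IsHermitian) (i : Fin d) :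
    l2norm (hA.eigenvectorBasis i) = 1 := by
  simp [l2norm_eq_norm_toLp, hA.eigenvectorBasis.orthonormal.1 i]

theorem abs_eigenvalues_le_specNorm (hA : A.IsHermitian) (i : Fin d) :
    |hA.eigenvalues i| ≤ specNorm A := by
  simpa [hA.mulVec_eigenvectorBasis, l2norm_smul, l2norm_eigenvectorBasis] using
    l2norm_mulVec_le_specNorm A (l2norm_eigenvectorBasis hA i)

theorem sigmaMinPos_le_eigenvalues (hA : A.IsHermitian) {i : Fin d}
    (hi : 0 < hA.eigenvalues i) : sigmaMinPos A ≤ hA.eigenvalues i := by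
  have hne : (hA.eigenvectorBasis i : Fin d → ℝ) ≠ 0 := fun h => by
    simpa [h, l2norm] using l2norm_eigenvectorBasis hA i
  refine csInf_le ⟨0, fun _ hs => hs.1.le⟩ ⟨hi, _, hne, ?_⟩
  rw [(isHermitian_iff_isSymm.1 hA).eq, ← mulVec_mulVec, hA.mulVec_eigenvectorBasis, mulVec_smul,
    hA.mulVec_eigenvectorBasis, smul_smul, sq]

theorem dotProduct_eigenvectorBasis_eq_zero (hA : A.IsHermitian) {e : Fin d → ℝ}
    (he : perpKer A e) {i : Fin d} (hi : hA.eigenvalues i = 0) :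
    e ⬝ᵥ hA.eigenvectorBasis i = 0 :=
  he _ (by rw [hA.mulVec_eigenvectorBasis, hi, zero_smul])

theorem l2norm_one_sub_smul_mulVec_le (hA : A.PosSemidef) {a s : ℝ} (ha : 0 ≤ a)
    (haA : a * specNorm A ≤ 1)
    (hs : ∀ i, 0 < hA.isHermitian.eigenvalues i → s ≤ hA.isHermitian.eigenvalues i)
    {e : Fin d → ℝ} (he : perpKer A e) :
    l2norm ((1 - a • A) *ᵥ e) ≤ Real.exp (-s * a) * l2norm e := by
  set hH := hA.isHermitian
  rw [l2norm_eq_norm_toLp, l2norm_eq_norm_toLp]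
  refine hH.eigenvectorBasis.norm_le_mul_norm_of_abs_inner_le (Real.exp_pos _).le fun i => ?_
  simp only [EuclideanSpace.inner_eq_star_dotProduct, star_trivial]
  rw [one_sub_smul_mulVec_dotProduct_eigenvectorBasis, abs_mul]
  rcases (hA.eigenvalues_nonneg i).eq_or_lt with h0 | hpos
  · simp [dotProduct_eigenvectorBasis_eq_zero hH he h0.symm]
  · have hle := abs_eigenvalues_le_specNorm hH i
    rw [abs_of_pos hpos] at hle
    gcongr
    exact abs_one_sub_mul_le_exp_neg ha ((mul_le_mul_of_nonneg_left hle ha).trans haA)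
      (hs i hpos)

theorem l2norm_iterate_le (hA : A.PosSemidef) {α : ℕ → ℝ} (hα : ∀ k, 0 ≤ α k)
    (hαA : ∀ k, α k * specNorm A ≤ 1) {s : ℝ}
    (hs : ∀ i, 0 < hA.isHermitian.eigenvalues i → s ≤ hA.isHermitian.eigenvalues i)
    {e : ℕ → Fin d → ℝ} (he : perpKer A (e 1))
    (hrec : ∀ k, 1 ≤ k → e (k + 1) = (1 - α k • A) *ᵥ e k) (k : ℕ) :
    l2norm (e (k + 1)) ≤ Real.exp (-s * ∑ ℓ ∈ Finset.Icc 1 k, α ℓ) * l2norm (e 1) := by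
  have hperp : ∀ k, perpKer A (e (k + 1)) := fun k => by
    induction k with
    | zero => exact he
    | succ k ih => rw [hrec _ k.succ_pos]; exact perpKer_one_sub_smul_mulVec hA.isHermitian ih _
  induction k with
  | zero => simp
  | succ k ih =>
    calc l2norm (e (k + 1 + 1))
        ≤ Real.exp (-s * α (k + 1)) * l2norm (e (k + 1)) := by
          rw [hrec _ k.succ_pos]
          exact l2norm_one_sub_smul_mulVec_le hA (hα _) (hαA _) hs (hperp k)
      _ ≤ Real.exp (-s * α (k + 1)) *
            (Real.exp (-s * ∑ ℓ ∈ Finset.Icc 1 k, α ℓ) * l2norm (e 1)) := by gcongr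
      _ = Real.exp (-s * ∑ ℓ ∈ Finset.Icc 1 (k + 1), α ℓ) * l2norm (e 1) := by
          rw [Finset.sum_Icc_succ_top (by omega), ← mul_assoc, ← Real.exp_add]
          ring_nf

end Spectral

theorem tendsto_zero_of_le_exp_neg_mul {u S : ℕ → ℝ} {s C : ℝ} (hu : ∀ k, 0 ≤ u k)
    (hs : 0 < s) (hS : Tendsto S atTop atTop)
    (hle : ∀ k, u (k + 1) ≤ Real.exp (-s * S k) * C) : Tendsto u atTop (nhds 0) := by
  rw [← tendsto_add_atTop_iff_nat 1]
  refine squeeze_zero (fun k => hu _) hle ?_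
  have hexp := Real.tendsto_exp_atBot.comp (tendsto_neg_atTop_atBot.comp (hS.const_mul_atTop hs))
  simpa [Function.comp_def] using hexp.mul_const C

section MoorePenrose

variable {n d : ℕ} {X : Matrix (Fin n) (Fin d) ℝ} {Xp : Matrix (Fin d) (Fin n) ℝ}

theorem IsMoorePenrose.transpose_mul_self_mul (h : IsMoorePenrose X Xp) :
    Xᵀ * X * Xp = Xᵀ := by
  rw [Matrix.mul_assoc, ← h.2.2.1, ← transpose_mul, h.1]

theorem IsMoorePenrose.perpKer_mulVec (h : IsMoorePenrose X Xp) (y : Fin n → ℝ) :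
    perpKer X (Xp *ᵥ y) := fun v hv => by
  rw [← h.2.1, ← mulVec_mulVec, dotProduct_comm, ← dotProduct_transpose_mulVec, h.2.2.2,
    ← mulVec_mulVec, hv, mulVec_zero, dotProduct_zero]

theorem IsMoorePenrose.sub_mulVec_eq_of_gd_step (h : IsMoorePenrose X Xp) {Y : Fin n → ℝ}
    {a : ℝ} {w w' : Fin d → ℝ}
    (hw' : w' = (1 - a • (Xᵀ * X)) *ᵥ w + a • (Xᵀ *ᵥ Y)) :
    w' - Xp *ᵥ Y = (1 - a • (Xᵀ * X)) *ᵥ (w - Xp *ᵥ Y) := by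
  have hXpY : (Xᵀ * X) *ᵥ (Xp *ᵥ Y) = Xᵀ *ᵥ Y := by rw [mulVec_mulVec, h.transpose_mul_self_mul]
  rw [hw', mulVec_sub, sub_mulVec, sub_mulVec, one_mulVec, one_mulVec, smul_mulVec,
    smul_mulVec, hXpY]
  abel

end MoorePenrose

/-- Lemma 1 / convergence of noiseless gradient descent.
If `w₁ ⊥ ker X` and `sup_ℓ α_ℓ‖XᵀX‖ < 1`, the gradient descent iterates
`w_{k+1} = (I - α_k XᵀX) w_k + α_k Xᵀ Y` converge to the minimum-norm
least squares solution `X⁺Y` at an exponential rate; in particular they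
converge whenever `∑ α_ℓ = ∞`. -/
theorem randomly_weighted_gd_stmt0 {n d : ℕ}
    (X : Matrix (Fin n) (Fin d) ℝ) (Y : Fin n → ℝ)
    (Xp : Matrix (Fin d) (Fin n) ℝ) (hXp : IsMoorePenrose X Xp)
    (α : ℕ → ℝ) (hαpos : ∀ k, 0 < α k)
    (hsup : ∃ c : ℝ, c < 1 ∧ ∀ k, α k * specNorm (Xᵀ * X) ≤ c)
    (w : ℕ → Fin d → ℝ)
    (hw1 : perpKer X (w 1))
    (hrec : ∀ k, 1 ≤ k →
      w (k + 1) = ((1 : Matrix (Fin d) (Fin d) ℝ) - α k • (Xᵀ * X)) *ᵥ w k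
        + α k • (Xᵀ *ᵥ Y)) :
    (∀ k, 1 ≤ k →
      l2norm (w (k + 1) - Xp *ᵥ Y)
        ≤ Real.exp (-(sigmaMinPos (Xᵀ * X)) * ∑ ℓ ∈ Finset.Icc 1 k, α ℓ)
            * l2norm (w 1 - Xp *ᵥ Y))
    ∧ (Tendsto (fun k => ∑ ℓ ∈ Finset.Icc 1 k, α ℓ) atTop atTop →
        Tendsto (fun k => l2norm (w k - Xp *ᵥ Y)) atTop (nhds 0)) := by
  obtain ⟨c, hc, hαA⟩ := hsup
  have hA : (Xᵀ * X).PosSemidef := by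
    simpa [conjTranspose_eq_transpose_of_trivial] using posSemidef_conjTranspose_mul_self X
  have hbound := fun s hs => l2norm_iterate_le hA (fun k => (hαpos k).le)
    (fun k => (hαA k).trans hc.le) (s := s) hs (e := fun k => w k - Xp *ᵥ Y)
    (perpKer_transpose_mul_self_iff.2 (hw1.sub (hXp.perpKer_mulVec Y)))
    (fun k hk => hXp.sub_mulVec_eq_of_gd_step (hrec k hk))
  refine ⟨fun k _ => hbound _ (fun i => sigmaMinPos_le_eigenvalues hA.isHermitian) k,
    fun hS => ?_⟩
  obtain ⟨s, hs0, hs⟩ := exists_pos_forall_le_of_pos hA.isHermitian.eigenvalues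
  exact tendsto_zero_of_le_exp_neg_mul (fun k => l2norm_nonneg _) hs0 hS (hbound s hs)
end
end

section
/- Let X be an n×d real matrix, Y ∈ ℝⁿ, and let D₁, D₂, … be i.i.d. copies of a random n×n diagonal matrix D with finite fourth moments and M₂ = E[D²] non-singular. Define 𝕏̂ = Xᵀ M₂ X, the weighted minimum-norm solution ŵ = (M₂^{1/2}X)⁺ (M₂^{1/2}Y), and the randomly weighted gradient descent iterates ŵ_{k+1} = (I − α_k · Xᵀ D_k² X) ŵ_k + α_k · Xᵀ D_k² Y with step-sizes α_k > 0, where ŵ₁ is independent of the D_k. Then for every k ≥ 1, E[ŵ_{k+1} − ŵ] = (I − α_k · 𝕏̂) E[ŵ_k − ŵ], where the expectation is over the sequence of weighting matrices. -/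
open Matrix MeasureTheory ProbabilityTheory Filter
open scoped BigOperators

noncomputable section

/-! The step `w ↦ (I - a XᵀSX) w + a XᵀSY` is affine in `w` and linear in the weights `S`.
The iterate `ŵ_k` is a measurable function of `ŵ₁` and the past weights `D₀, …, D_{k-1}`, hence
independent of the fresh weights `D_k`; so the expectation of a step is the step taken with the
mean weights `M₂` from the mean iterate. The Penrose conditions give the weighted normal equation
`XᵀM₂Xŵ = XᵀM₂Y`, i.e. `ŵ` is a fixed point of the mean step, and subtracting it leaves the
linear recursion. -/

namespace ProbabilityTheory

variable {Ω α β γ : Type*} {mΩ : MeasurableSpace Ω} {μ : Measure Ω} [IsFiniteMeasure μ]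
  [MeasurableSpace α] [MeasurableSpace β] [MeasurableSpace γ]

lemma IndepFun.prodMk_left_of_prodMk_right {f : Ω → α} {g : Ω → β} {h : Ω → γ}
    (hf : Measurable f) (hg : Measurable g) (hh : Measurable h)
    (hfgh : IndepFun f (fun ω => (g ω, h ω)) μ) (hgh : IndepFun g h μ) :
    IndepFun (fun ω => (f ω, g ω)) h μ := by
  have hfg : IndepFun f g μ := hfgh.comp measurable_id measurable_fst
  rw [indepFun_iff_map_prod_eq_prod_map_map (hf.prodMk hg).aemeasurable hh.aemeasurable,
    (indepFun_iff_map_prod_eq_prod_map_map hf.aemeasurable hg.aemeasurable).1 hfg,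
    ← MeasurableEquiv.prodAssoc.map_measurableEquiv_injective.eq_iff,
    Measure.prodAssoc_prod,
    ← (indepFun_iff_map_prod_eq_prod_map_map hg.aemeasurable hh.aemeasurable).1 hgh,
    ← (indepFun_iff_map_prod_eq_prod_map_map hf.aemeasurable (hg.prodMk hh).aemeasurable).1 hfgh,
    Measure.map_map MeasurableEquiv.prodAssoc.measurable ((hf.prodMk hg).prodMk hh)]
  rfl

variable {D : ℕ → Ω → β} {w : ℕ → Ω → γ} {step : ℕ → γ → β → γ} {k₀ : ℕ}

lemma iIndepFun.indepFun_history (hD : iIndepFun D μ) (hDm : ∀ k, Measurable (D k))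
    (hw : Measurable (w k₀)) (hwD : IndepFun (w k₀) (fun ω k => D k ω) μ) (k : ℕ) :
    IndepFun (fun ω => (w k₀ ω, fun j : Fin k => D j ω)) (D k) μ := by
  have hpast : Measurable fun ω (j : Fin k) => D j ω := measurable_pi_lambda _ fun j => hDm j
  refine IndepFun.prodMk_left_of_prodMk_right hw hpast (hDm k) ?_ ?_
  · exact hwD.comp measurable_id (ψ := fun p : ℕ → β => (fun j : Fin k => p j, p k))
      ((measurable_pi_lambda _ fun j => measurable_pi_apply _).prodMk (measurable_pi_apply _))
  · exact (hD.indepFun_finset (Finset.range k) {k} (by simp) hDm).comp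
      (φ := fun (v : Finset.range k → β) (j : Fin k) => v ⟨j, Finset.mem_range.2 j.isLt⟩)
      (ψ := fun (v : ({k} : Finset ℕ) → β) => v ⟨k, Finset.mem_singleton_self k⟩)
      (measurable_pi_lambda _ fun j => measurable_pi_apply _) (measurable_pi_apply _)

lemma exists_measurable_comp_history (hstep : ∀ k, Measurable (Function.uncurry (step k)))
    (hrec : ∀ k, k₀ ≤ k → ∀ ω, w (k + 1) ω = step k (w k ω) (D k ω)) {k : ℕ} (hk : k₀ ≤ k) :
    ∃ F : γ × (Fin k → β) → γ, Measurable F ∧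
      ∀ ω, w k ω = F (w k₀ ω, fun j : Fin k => D j ω) := by
  induction k, hk using Nat.le_induction with
  | base => exact ⟨Prod.fst, measurable_fst, fun ω => rfl⟩
  | succ k hk ih =>
    obtain ⟨F, hF, hwF⟩ := ih
    refine ⟨fun p => step k (F (p.1, fun j => p.2 j.castSucc)) (p.2 (Fin.last k)), ?_, ?_⟩
    · exact (hstep k).comp ((hF.comp (measurable_fst.prodMk (measurable_pi_lambda _ fun j =>
        (measurable_pi_apply _).comp measurable_snd))).prodMk
        ((measurable_pi_apply _).comp measurable_snd))
    · intro ω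
      simp [hrec k hk ω, hwF ω]

lemma iIndepFun.indepFun_of_recursion (hD : iIndepFun D μ) (hDm : ∀ k, Measurable (D k))
    (hw : Measurable (w k₀)) (hwD : IndepFun (w k₀) (fun ω k => D k ω) μ)
    (hstep : ∀ k, Measurable (Function.uncurry (step k)))
    (hrec : ∀ k, k₀ ≤ k → ∀ ω, w (k + 1) ω = step k (w k ω) (D k ω)) {k : ℕ} (hk : k₀ ≤ k) :
    IndepFun (w k) (D k) μ := by
  obtain ⟨F, hF, hwF⟩ := exists_measurable_comp_history hstep hrec hk
  have hw_eq : w k = F ∘ fun ω => (w k₀ ω, fun j : Fin k => D j ω) := funext hwF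
  rw [hw_eq]
  exact (hD.indepFun_history hDm hw hwD k).comp hF measurable_id

end ProbabilityTheory

section vecExp

variable {Ω : Type*} [MeasurableSpace Ω] {μ : Measure Ω} {m n : ℕ}

lemma MeasureTheory.Integrable.const_mulVec (A : Matrix (Fin m) (Fin n) ℝ) {v : Ω → Fin n → ℝ}
    (hv : Integrable v μ) : Integrable (fun ω => A *ᵥ v ω) μ :=
  (LinearMap.toContinuousLinearMap (Matrix.mulVecLin A)).integrable_comp hv

lemma vecExp_add {u v : Ω → Fin n → ℝ} (hu : Integrable u μ) (hv : Integrable v μ) :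
    vecExp μ (fun ω => u ω + v ω) = vecExp μ u + vecExp μ v :=
  funext fun i => integral_add (integrable_pi_iff.1 hu i) (integrable_pi_iff.1 hv i)

lemma vecExp_smul (a : ℝ) (v : Ω → Fin n → ℝ) :
    vecExp μ (fun ω => a • v ω) = a • vecExp μ v :=
  funext fun _ => integral_const_mul a _

lemma vecExp_sub_const [IsProbabilityMeasure μ] {v : Ω → Fin n → ℝ} (hv : Integrable v μ)
    (c : Fin n → ℝ) : vecExp μ (fun ω => v ω - c) = vecExp μ v - c :=
  funext fun i => by simp [vecExp, integral_sub (integrable_pi_iff.1 hv i) (integrable_const _)]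

lemma vecExp_const_sub [IsProbabilityMeasure μ] (c : Fin n → ℝ) {v : Ω → Fin n → ℝ}
    (hv : Integrable v μ) : vecExp μ (fun ω => c - v ω) = c - vecExp μ v :=
  funext fun i => by simp [vecExp, integral_sub (integrable_const _) (integrable_pi_iff.1 hv i)]

lemma vecExp_mulVec (A : Matrix (Fin m) (Fin n) ℝ) {v : Ω → Fin n → ℝ} (hv : Integrable v μ) :
    vecExp μ (fun ω => A *ᵥ v ω) = A *ᵥ vecExp μ v := by
  funext i
  simp only [vecExp, mulVec, dotProduct]
  rw [integral_finsetSum _ fun j _ => (integrable_pi_iff.1 hv j).const_mul _]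
  simp only [integral_const_mul]

lemma ProbabilityTheory.IndepFun.integrable_pi_mul {s v : Ω → Fin n → ℝ} (hsv : IndepFun s v μ)
    (hs : Integrable s μ) (hv : Integrable v μ) : Integrable (fun ω => s ω * v ω) μ :=
  integrable_pi_iff.2 fun i =>
    (hsv.comp (measurable_pi_apply i) (measurable_pi_apply i)).integrable_mul
      (integrable_pi_iff.1 hs i) (integrable_pi_iff.1 hv i)

lemma ProbabilityTheory.IndepFun.vecExp_mul {s v : Ω → Fin n → ℝ} (hsv : IndepFun s v μ)
    (hs : Integrable s μ) (hv : Integrable v μ) :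
    vecExp μ (fun ω => s ω * v ω) = vecExp μ s * vecExp μ v :=
  funext fun i =>
    (hsv.comp (measurable_pi_apply i) (measurable_pi_apply i)).integral_mul_eq_mul_integral
      (integrable_pi_iff.1 hs i).aestronglyMeasurable
      (integrable_pi_iff.1 hv i).aestronglyMeasurable

end vecExp

section WeightedGD

variable {n d : ℕ} (X : Matrix (Fin n) (Fin d) ℝ) (Y : Fin n → ℝ)

def weightedGDStep (a : ℝ) (s : Fin n → ℝ) (w : Fin d → ℝ) : Fin d → ℝ :=
  ((1 : Matrix (Fin d) (Fin d) ℝ) - a • (Xᵀ * diagonal s * X)) *ᵥ w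
    + a • ((Xᵀ * diagonal s) *ᵥ Y)

lemma weightedGDStep_eq (a : ℝ) (s : Fin n → ℝ) (w : Fin d → ℝ) :
    weightedGDStep X Y a s w = w + a • (Xᵀ *ᵥ (s * (Y - X *ᵥ w))) := by
  have hdiag : ∀ u, diagonal s *ᵥ u = s * u := fun u => funext fun i => mulVec_diagonal s u i
  simp only [weightedGDStep, sub_mulVec, one_mulVec, smul_mulVec, ← mulVec_mulVec, hdiag,
    mul_sub, mulVec_sub, smul_sub]
  abel

lemma weightedGDStep_sub_eq {a : ℝ} {s : Fin n → ℝ} {what : Fin d → ℝ}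
    (hwhat : (Xᵀ * diagonal s * X) *ᵥ what = (Xᵀ * diagonal s) *ᵥ Y) (w : Fin d → ℝ) :
    weightedGDStep X Y a s w - what
      = ((1 : Matrix (Fin d) (Fin d) ℝ) - a • (Xᵀ * diagonal s * X)) *ᵥ (w - what) := by
  rw [weightedGDStep, ← hwhat, mulVec_sub]
  simp only [sub_mulVec, one_mulVec, smul_mulVec]
  abel

variable {Ω : Type*} [MeasurableSpace Ω] {μ : Measure Ω} [IsProbabilityMeasure μ]

lemma ProbabilityTheory.IndepFun.integrable_weightedGDStep (a : ℝ) {s : Ω → Fin n → ℝ}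
    {v : Ω → Fin d → ℝ} (hsv : IndepFun s v μ) (hs : Integrable s μ) (hv : Integrable v μ) :
    Integrable (fun ω => weightedGDStep X Y a (s ω) (v ω)) μ := by
  simp only [weightedGDStep_eq]
  have hres : IndepFun s (fun ω => Y - X *ᵥ v ω) μ :=
    hsv.comp measurable_id (measurable_const.sub (Continuous.measurable (by fun_prop)))
  exact hv.add (((hres.integrable_pi_mul hs
    ((integrable_const Y).sub (hv.const_mulVec X))).const_mulVec Xᵀ).smul a)

lemma ProbabilityTheory.IndepFun.vecExp_weightedGDStep (a : ℝ) {s : Ω → Fin n → ℝ}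
    {v : Ω → Fin d → ℝ} (hsv : IndepFun s v μ) (hs : Integrable s μ) (hv : Integrable v μ) :
    vecExp μ (fun ω => weightedGDStep X Y a (s ω) (v ω))
      = weightedGDStep X Y a (vecExp μ s) (vecExp μ v) := by
  have hres : IndepFun s (fun ω => Y - X *ᵥ v ω) μ :=
    hsv.comp measurable_id (measurable_const.sub (Continuous.measurable (by fun_prop)))
  have hres_int : Integrable (fun ω => Y - X *ᵥ v ω) μ :=
    (integrable_const Y).sub (hv.const_mulVec X)
  have hprod_int := hres.integrable_pi_mul hs hres_int
  have hcorr_int : Integrable (fun ω => a • Xᵀ *ᵥ (s ω * (Y - X *ᵥ v ω))) μ :=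
    (hprod_int.const_mulVec Xᵀ).smul a
  simp only [weightedGDStep_eq]
  rw [vecExp_add hv hcorr_int, vecExp_smul,
    vecExp_mulVec _ hprod_int, hres.vecExp_mul hs hres_int,
    vecExp_const_sub _ (hv.const_mulVec X), vecExp_mulVec _ hv]

end WeightedGD

lemma IsMoorePenrose.transpose_mul_mul_self {m n : ℕ} {A : Matrix (Fin m) (Fin n) ℝ}
    {B : Matrix (Fin n) (Fin m) ℝ} (h : IsMoorePenrose A B) : Aᵀ * (A * B) = Aᵀ := by
  obtain ⟨hABA, -, hAB, -⟩ := h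
  rw [← hAB, ← transpose_mul, hABA]

lemma IsMoorePenrose.weighted_normal_equation {n d : ℕ} {X : Matrix (Fin n) (Fin d) ℝ}
    {m : Fin n → ℝ} (hm : ∀ i, 0 ≤ m i) {B : Matrix (Fin d) (Fin n) ℝ}
    (hB : IsMoorePenrose (diagonal (fun i => √(m i)) * X) B) (Y : Fin n → ℝ) :
    (Xᵀ * diagonal m * X) *ᵥ (B *ᵥ (diagonal (fun i => √(m i)) *ᵥ Y))
      = (Xᵀ * diagonal m) *ᵥ Y := by
  set R := diagonal fun i => √(m i)
  have hRR : diagonal m = Rᵀ * R := by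
    rw [diagonal_transpose, diagonal_mul_diagonal]
    exact congrArg diagonal (funext fun i => (Real.mul_self_sqrt (hm i)).symm)
  have hR : Rᵀ = R := diagonal_transpose _
  calc (Xᵀ * diagonal m * X) *ᵥ (B *ᵥ (R *ᵥ Y))
      = ((R * X)ᵀ * ((R * X) * B) * R) *ᵥ Y := by
        simp only [mulVec_mulVec, hRR, transpose_mul, Matrix.mul_assoc]
    _ = (Xᵀ * diagonal m) *ᵥ Y := by
        rw [hB.transpose_mul_mul_self, hRR, transpose_mul, hR, Matrix.mul_assoc]

theorem randomly_weighted_gd_stmt4_general {n d : ℕ}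
    {Ω : Type*} [MeasurableSpace Ω] (μ : Measure Ω) [IsProbabilityMeasure μ]
    (X : Matrix (Fin n) (Fin d) ℝ) (Y : Fin n → ℝ)
    (D : ℕ → Ω → Fin n → ℝ) (hDmeas : ∀ k, Measurable (D k))
    (hDindep : iIndepFun D μ)
    (hDident : ∀ k, IdentDistrib (D k) (D 0) μ μ)
    (hmom : ∀ i, ∀ p : ℕ, p ≤ 4 → Integrable (fun ω => (D 0 ω i) ^ p) μ)
    (M2 : Matrix (Fin n) (Fin n) ℝ)
    (hM2 : M2 = Matrix.diagonal fun i => ∫ ω, (D 0 ω i) ^ 2 ∂μ)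
    (Rh : Matrix (Fin n) (Fin n) ℝ)
    (hRh : Rh = Matrix.diagonal fun i => Real.sqrt (∫ ω, (D 0 ω i) ^ 2 ∂μ))
    (Xhp : Matrix (Fin d) (Fin n) ℝ) (hXhp : IsMoorePenrose (Rh * X) Xhp)
    (what : Fin d → ℝ) (hwhat : what = Xhp *ᵥ (Rh *ᵥ Y))
    (α : ℕ → ℝ)
    (w1 : Ω → Fin d → ℝ) (hw1meas : Measurable w1)
    (hw1int : ∀ i, Integrable (fun ω => w1 ω i) μ)
    (hw1indep : IndepFun w1 (fun ω k => D k ω) μ)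
    (w : ℕ → Ω → Fin d → ℝ) (hinit : w 1 = w1)
    (hrec : ∀ k, 1 ≤ k → ∀ ω,
      w (k + 1) ω = ((1 : Matrix (Fin d) (Fin d) ℝ)
          - α k • (Xᵀ * Matrix.diagonal (fun i => (D k ω i) ^ 2) * X)) *ᵥ w k ω
        + α k • ((Xᵀ * Matrix.diagonal (fun i => (D k ω i) ^ 2)) *ᵥ Y)) :
    ∀ k, 1 ≤ k →
      vecExp μ (fun ω => w (k + 1) ω - what)
        = ((1 : Matrix (Fin d) (Fin d) ℝ) - α k • (Xᵀ * M2 * X)) *ᵥ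
            vecExp μ (fun ω => w k ω - what) := by
  subst hM2 hRh hwhat hinit
  set m : Fin n → ℝ := fun i => ∫ ω, (D 0 ω i) ^ 2 ∂μ
  set s : ℕ → Ω → Fin n → ℝ := fun j ω i => (D j ω i) ^ 2
  have hsq_ident (j : ℕ) (i : Fin n) :
      IdentDistrib (fun ω => (D j ω i) ^ 2) (fun ω => (D 0 ω i) ^ 2) μ μ :=
    (hDident j).comp ((measurable_pi_apply i).pow_const 2)
  have hs_int (j : ℕ) : Integrable (s j) μ :=
    integrable_pi_iff.2 fun i => (hsq_ident j i).integrable_iff.2 (hmom i 2 (by norm_num))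
  have hs_mean (j : ℕ) : vecExp μ (s j) = m := funext fun i => (hsq_ident j i).integral_eq
  have hstep : ∀ j ≥ 1, ∀ ω, w (j + 1) ω = weightedGDStep X Y (α j) (s j ω) (w j ω) := hrec
  have hstep_meas (j : ℕ) :
      Measurable (Function.uncurry fun (v : Fin d → ℝ) (x : Fin n → ℝ) =>
        weightedGDStep X Y (α j) (fun i => x i ^ 2) v) := by
    simp only [weightedGDStep_eq]
    fun_prop
  have hsw (j : ℕ) (hj : 1 ≤ j) : IndepFun (s j) (w j) μ :=
    (hDindep.indepFun_of_recursion hDmeas hw1meas hw1indep hstep_meas hstep hj).symm.comp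
      (measurable_pi_lambda _ fun i => (measurable_pi_apply i).pow_const 2) measurable_id
  have hw_int (j : ℕ) (hj : 1 ≤ j) : Integrable (w j) μ := by
    induction j, hj using Nat.le_induction with
    | base => exact integrable_pi_iff.2 hw1int
    | succ j hj ih =>
      rw [funext (hstep j hj)]
      exact (hsw j hj).integrable_weightedGDStep X Y (α j) (hs_int j) ih
  have hnormal := hXhp.weighted_normal_equation (fun i => integral_nonneg fun ω => sq_nonneg _) Y
  intro k hk
  calc vecExp μ (fun ω => w (k + 1) ω - _)
      = weightedGDStep X Y (α k) m (vecExp μ (w k)) - _ := by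
        rw [vecExp_sub_const (hw_int (k + 1) (by omega)), funext (hstep k hk),
          (hsw k hk).vecExp_weightedGDStep X Y (α k) (hs_int k) (hw_int k hk), hs_mean]
    _ = _ := by
        rw [weightedGDStep_sub_eq X Y hnormal, vecExp_sub_const (hw_int k hk)]

/-- marginalized dynamics, recursion for the first moment.
For randomly weighted gradient descent with i.i.d. diagonal weightings `D_k`
(given by their diagonal entries) with finite fourth moments, `M₂ = E[D²]`
non-singular, `𝕏̂ = XᵀM₂X` and `ŵ = (M₂^{1/2}X)⁺(M₂^{1/2}Y)`, the expectations
satisfy `E[ŵ_{k+1} - ŵ] = (I - α_k 𝕏̂) E[ŵ_k - ŵ]`. -/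
theorem randomly_weighted_gd_stmt4 {n d : ℕ}
    {Ω : Type*} [MeasurableSpace Ω] (μ : Measure Ω) [IsProbabilityMeasure μ]
    (X : Matrix (Fin n) (Fin d) ℝ) (Y : Fin n → ℝ)
    (D : ℕ → Ω → Fin n → ℝ) (hDmeas : ∀ k, Measurable (D k))
    (hDindep : iIndepFun D μ)
    (hDident : ∀ k, IdentDistrib (D k) (D 0) μ μ)
    (hmom : ∀ i, ∀ p : ℕ, p ≤ 4 → Integrable (fun ω => (D 0 ω i) ^ p) μ)
    (M2 : Matrix (Fin n) (Fin n) ℝ)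
    (hM2 : M2 = Matrix.diagonal fun i => ∫ ω, (D 0 ω i) ^ 2 ∂μ)
    (hM2unit : IsUnit M2.det)
    (Rh : Matrix (Fin n) (Fin n) ℝ)
    (hRh : Rh = Matrix.diagonal fun i => Real.sqrt (∫ ω, (D 0 ω i) ^ 2 ∂μ))
    (Xhp : Matrix (Fin d) (Fin n) ℝ) (hXhp : IsMoorePenrose (Rh * X) Xhp)
    (what : Fin d → ℝ) (hwhat : what = Xhp *ᵥ (Rh *ᵥ Y))
    (α : ℕ → ℝ) (hαpos : ∀ k, 0 < α k)
    (w1 : Ω → Fin d → ℝ) (hw1meas : Measurable w1)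
    (hw1int : ∀ i, Integrable (fun ω => w1 ω i) μ)
    (hw1indep : IndepFun w1 (fun ω k => D k ω) μ)
    (w : ℕ → Ω → Fin d → ℝ) (hinit : w 1 = w1)
    (hrec : ∀ k, 1 ≤ k → ∀ ω,
      w (k + 1) ω = ((1 : Matrix (Fin d) (Fin d) ℝ)
          - α k • (Xᵀ * Matrix.diagonal (fun i => (D k ω i) ^ 2) * X)) *ᵥ w k ω
        + α k • ((Xᵀ * Matrix.diagonal (fun i => (D k ω i) ^ 2)) *ᵥ Y)) :
    ∀ k, 1 ≤ k →
      vecExp μ (fun ω => w (k + 1) ω - what)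
        = ((1 : Matrix (Fin d) (Fin d) ℝ) - α k • (Xᵀ * M2 * X)) *ᵥ
            vecExp μ (fun ω => w k ω - what) :=
  randomly_weighted_gd_stmt4_general μ X Y D hDmeas hDindep hDident hmom M2 hM2 Rh hRh Xhp hXhp what
    hwhat α w1 hw1meas hw1int hw1indep w hinit hrec
end
end

section
/- Let X be an n×d real matrix, w* ∈ ℝᵈ, and Y = Xw* + ε where ε ∈ ℝⁿ is a centered random vector with covariance matrix Σ_ε. Let M₂ be a non-singular positive semi-definite n×n diagonal matrix, X̂ = M₂^{1/2}X, and ŵ = X̂⁺(M₂^{1/2}Y). Then E[‖w* − ŵ‖₂²] = ‖(I − X⁺X)w*‖₂² + Tr((X̂⁺M₂^{1/2})Σ_ε(X̂⁺M₂^{1/2})ᵀ), where X⁺ and X̂⁺ denote Moore–Penrose pseudo-inverses. -/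
open Matrix MeasureTheory ProbabilityTheory Filter
open scoped BigOperators

noncomputable section

/-- risk of the weighted least squares estimator.
In the linear model `Y = Xw* + ε`, the weighted minimum-norm estimator
`ŵ = X̂⁺(M₂^{1/2}Y)` satisfies
`E‖w* - ŵ‖₂² = ‖(I - X⁺X)w*‖₂² + Tr((X̂⁺M₂^{1/2})Σ_ε(X̂⁺M₂^{1/2})ᵀ)`. -/
theorem randomly_weighted_gd_stmt17 {n d : ℕ}
    {Ω : Type*} [MeasurableSpace Ω] (μ : Measure Ω) [IsProbabilityMeasure μ]
    (X : Matrix (Fin n) (Fin d) ℝ) (wstar : Fin d → ℝ)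
    (eps : Ω → Fin n → ℝ) (hepsmeas : Measurable eps)
    (hepsint : ∀ i, Integrable (fun ω => eps ω i) μ)
    (hepsint2 : ∀ i j, Integrable (fun ω => eps ω i * eps ω j) μ)
    (hepscentered : ∀ i, ∫ ω, eps ω i ∂μ = 0)
    (Seps : Matrix (Fin n) (Fin n) ℝ)
    (hSeps : Seps = Matrix.of fun i j => ∫ ω, eps ω i * eps ω j ∂μ)
    (Yf : Ω → Fin n → ℝ) (hY : ∀ ω, Yf ω = X *ᵥ wstar + eps ω)
    (M2 Rh : Matrix (Fin n) (Fin n) ℝ)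
    (hM2diag : M2.IsDiag) (hM2psd : M2.PosSemidef) (hM2unit : IsUnit M2.det)
    (hRhpsd : Rh.PosSemidef) (hRR : Rh * Rh = M2)
    (Xp : Matrix (Fin d) (Fin n) ℝ) (hXp : IsMoorePenrose X Xp)
    (Xhp : Matrix (Fin d) (Fin n) ℝ) (hXhp : IsMoorePenrose (Rh * X) Xhp) :
    ∫ ω, (l2norm (wstar - Xhp *ᵥ (Rh *ᵥ Yf ω))) ^ 2 ∂μ
      = (l2norm (((1 : Matrix (Fin d) (Fin d) ℝ) - Xp * X) *ᵥ wstar)) ^ 2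
        + Matrix.trace ((Xhp * Rh) * Seps * (Xhp * Rh)ᵀ) := by
  classical
  -- `Rh` is invertible
  have hRhdet : IsUnit Rh.det := by
    have h : IsUnit (Rh.det * Rh.det) := by
      rw [← Matrix.det_mul, hRR]; exact hM2unit
    exact isUnit_of_mul_isUnit_left h
  letI : Invertible Rh := Rh.invertibleOfIsUnitDet hRhdet
  obtain ⟨h1, h2, h3, h4⟩ := hXp
  obtain ⟨g1, g2, g3, g4⟩ := hXhp
  set P := Xp * X with hP
  set Q := Xhp * (Rh * X) with hQ
  -- the two projections coincide
  have hXQ : X * Q = X := by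
    have h : Rh * (X * Q) = Rh * X := by
      calc Rh * (X * Q) = (Rh * X) * Xhp * (Rh * X) := by
            rw [hQ, ← Matrix.mul_assoc, ← Matrix.mul_assoc]
        _ = Rh * X := g1
    calc X * Q = (⅟Rh * Rh) * (X * Q) := by rw [invOf_mul_self, Matrix.one_mul]
      _ = ⅟Rh * (Rh * (X * Q)) := by rw [Matrix.mul_assoc]
      _ = ⅟Rh * (Rh * X) := by rw [h]
      _ = (⅟Rh * Rh) * X := by rw [Matrix.mul_assoc]
      _ = X := by rw [invOf_mul_self, Matrix.one_mul]
  have hPQ : P * Q = P := by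
    rw [hP, Matrix.mul_assoc, hXQ]
  have hQP : Q * P = Q := by
    calc Q * P = Xhp * ((Rh * X) * (Xp * X)) := by rw [hQ, Matrix.mul_assoc]
      _ = Xhp * (Rh * (X * Xp * X)) := by
            rw [Matrix.mul_assoc X Xp X, Matrix.mul_assoc Rh X (Xp * X)]
      _ = Q := by rw [h1, hQ]
  have hPsym : Pᵀ = P := h4
  have hQsym : Qᵀ = Q := g4
  have hPeqQ : P = Q := by
    have ht : (P * Q)ᵀ = Qᵀ * Pᵀ := Matrix.transpose_mul P Q
    rw [hPQ, hPsym, hQsym] at ht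
    rw [hQP] at ht
    exact ht
  -- decomposition of the error vector
  set A := Xhp * Rh with hA
  set u : Fin d → ℝ := ((1 : Matrix (Fin d) (Fin d) ℝ) - Xp * X) *ᵥ wstar with hu
  have hdecomp : ∀ ω, wstar - Xhp *ᵥ (Rh *ᵥ Yf ω) = fun i => u i - (A *ᵥ eps ω) i := by
    intro ω
    funext i
    have : Xhp *ᵥ (Rh *ᵥ Yf ω) = Q *ᵥ wstar + A *ᵥ eps ω := by
      rw [hY, Matrix.mulVec_add, Matrix.mulVec_add, Matrix.mulVec_mulVec,
        Matrix.mulVec_mulVec, Matrix.mulVec_mulVec, hQ, hA, Matrix.mul_assoc]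
    rw [this]
    have hu' : u i = wstar i - (P *ᵥ wstar) i := by
      rw [hu, Matrix.sub_mulVec, Matrix.one_mulVec]; rfl
    simp [hu', hPeqQ, Pi.sub_apply, Pi.add_apply]
    ring
  -- pointwise value of mulVec
  have hvA : ∀ (ω : Ω) (i : Fin d), (A *ᵥ eps ω) i = ∑ j, A i j * eps ω j := by
    intro ω i; rfl
  -- integrability facts
  have hint1 : ∀ i : Fin d, Integrable (fun ω => (A *ᵥ eps ω) i) μ := by
    intro i
    simp only [hvA]
    exact integrable_finset_sum _ fun j _ => (hepsint j).const_mul _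
  have hsqexp : ∀ (i : Fin d) (ω : Ω),
      ((A *ᵥ eps ω) i) ^ 2 = ∑ j, ∑ k, (A i j * A i k) * (eps ω j * eps ω k) := by
    intro i ω
    rw [hvA, sq, Finset.sum_mul_sum]
    refine Finset.sum_congr rfl fun j _ => Finset.sum_congr rfl fun k _ => by ring
  have hint2 : ∀ i : Fin d, Integrable (fun ω => ((A *ᵥ eps ω) i) ^ 2) μ := by
    intro i
    have : (fun ω => ((A *ᵥ eps ω) i) ^ 2)
        = fun ω => ∑ j, ∑ k, (A i j * A i k) * (eps ω j * eps ω k) := by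
      funext ω; exact hsqexp i ω
    rw [this]
    exact integrable_finset_sum _ fun j _ =>
      integrable_finset_sum _ fun k _ => (hepsint2 j k).const_mul _
  have hintterm : ∀ i : Fin d,
      Integrable (fun ω => (u i - (A *ᵥ eps ω) i) ^ 2) μ := by
    intro i
    have : (fun ω => (u i - (A *ᵥ eps ω) i) ^ 2)
        = fun ω => (u i ^ 2 - (2 * u i) * (A *ᵥ eps ω) i) + ((A *ᵥ eps ω) i) ^ 2 := by
      funext ω; ring
    rw [this]
    exact ((integrable_const _).sub ((hint1 i).const_mul _)).add (hint2 i)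
  -- first moment of A ε is 0
  have hmean : ∀ i : Fin d, ∫ ω, (A *ᵥ eps ω) i ∂μ = 0 := by
    intro i
    simp only [hvA]
    rw [integral_finset_sum _ fun j _ => (hepsint j).const_mul _]
    simp [integral_const_mul, hepscentered]
  -- second moment
  have hsecond : ∀ i : Fin d, ∫ ω, ((A *ᵥ eps ω) i) ^ 2 ∂μ
      = ((Xhp * Rh) * Seps * (Xhp * Rh)ᵀ) i i := by
    intro i
    have h1' : ∫ ω, ((A *ᵥ eps ω) i) ^ 2 ∂μ
        = ∑ j, ∑ k, (A i j * A i k) * ∫ ω, eps ω j * eps ω k ∂μ := by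
      simp only [hsqexp i]
      rw [integral_finset_sum _ fun j _ =>
        integrable_finset_sum _ fun k _ => (hepsint2 j k).const_mul _]
      refine Finset.sum_congr rfl fun j _ => ?_
      rw [integral_finset_sum _ fun k _ => (hepsint2 j k).const_mul _]
      exact Finset.sum_congr rfl fun k _ => integral_const_mul _ _
    rw [h1', hSeps, ← hA]
    simp only [Matrix.mul_apply, Matrix.transpose_apply, Matrix.of_apply,
      Finset.sum_mul, Finset.mul_sum]
    rw [Finset.sum_comm]
    refine Finset.sum_congr rfl fun j _ => Finset.sum_congr rfl fun k _ => by ring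
  -- put everything together
  have hl2 : ∀ z : Fin d → ℝ, (l2norm z) ^ 2 = ∑ i, (z i) ^ 2 := by
    intro z
    exact Real.sq_sqrt (Finset.sum_nonneg fun i _ => sq_nonneg _)
  calc ∫ ω, (l2norm (wstar - Xhp *ᵥ (Rh *ᵥ Yf ω))) ^ 2 ∂μ
      = ∫ ω, ∑ i, (u i - (A *ᵥ eps ω) i) ^ 2 ∂μ := by
        refine integral_congr_ae (Filter.Eventually.of_forall fun ω => ?_)
        show l2norm (wstar - Xhp *ᵥ (Rh *ᵥ Yf ω)) ^ 2 = ∑ i, (u i - (A *ᵥ eps ω) i) ^ 2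
        rw [hdecomp ω, hl2]
    _ = ∑ i, ∫ ω, (u i - (A *ᵥ eps ω) i) ^ 2 ∂μ :=
        integral_finset_sum _ fun i _ => hintterm i
    _ = ∑ i, (u i ^ 2 + ((Xhp * Rh) * Seps * (Xhp * Rh)ᵀ) i i) := by
        refine Finset.sum_congr rfl fun i _ => ?_
        have hexp : (fun ω => (u i - (A *ᵥ eps ω) i) ^ 2)
            = fun ω => (u i ^ 2 - (2 * u i) * (A *ᵥ eps ω) i) + ((A *ᵥ eps ω) i) ^ 2 := by
          funext ω; ring
        have hg : Integrable (fun ω => 2 * u i * (A *ᵥ eps ω) i) μ :=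
          (hint1 i).const_mul _
        have hf : Integrable (fun ω => u i ^ 2 - 2 * u i * (A *ᵥ eps ω) i) μ :=
          (integrable_const _).sub hg
        rw [hexp, integral_add hf (hint2 i), integral_sub (integrable_const _) hg,
          integral_const_mul, hmean i, hsecond i]
        simp
    _ = (l2norm (((1 : Matrix (Fin d) (Fin d) ℝ) - Xp * X) *ᵥ wstar)) ^ 2
        + Matrix.trace ((Xhp * Rh) * Seps * (Xhp * Rh)ᵀ) := by
        rw [Finset.sum_add_distrib, hl2, ← hu]
        rfl
end
end
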